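/- Let x^L < 0 < x^U and suppose x_c ∈ [x^L, 0] satisfies 1 - tanh²(x_c) = (tanh(x^U) - tanh(x_c))/(x^U - x_c). Define F(x) = tanh(x) for x ≤ x_c and F(x) = tanh(x_c) + ((tanh(x^U) - tanh(x_c))/(x^U - x_c))·(x - x_c) for x > x_c. Then F is convex on [x^L, x^U] and F(x) ≤ tanh(x) for all x ∈ [x^L, x^U]. -/

import Mathlib

/-!
Since `tanh' = 1 - tanh ^ 2` is increasing on `(-∞, 0]`, gluing `tanh` at `x_c ≤ 0` to its tangent
line gives a function with increasing derivative on all of `ℝ`, hence a convex one. The tangent line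
stays below `tanh` on `[x_c, 0]` because `tanh` is convex there; in particular it is `≤ 0` at `0`,
and it meets `tanh` at `x^U`, so on `[0, x^U]`, where `tanh` is concave, it stays below `tanh` too.
-/

open Set

namespace Real

theorem hasDerivAt_tanh (x : ℝ) : HasDerivAt tanh (1 - tanh x ^ 2) x := by
  have hcosh : cosh x ≠ 0 := (cosh_pos x).ne'
  have hval : 1 - tanh x ^ 2 = (cosh x * cosh x - sinh x * sinh x) / cosh x ^ 2 := by
    rw [tanh_eq_sinh_div_cosh]
    field_simp
  rw [hval, show tanh = sinh / cosh from funext tanh_eq_sinh_div_cosh]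
  exact (hasDerivAt_sinh x).div (hasDerivAt_cosh x) hcosh

theorem deriv_tanh : deriv tanh = fun x => 1 - tanh x ^ 2 :=
  funext fun x => (hasDerivAt_tanh x).deriv

theorem differentiable_tanh : Differentiable ℝ tanh :=
  fun x => (hasDerivAt_tanh x).differentiableAt

theorem strictMono_tanh : StrictMono tanh :=
  strictMono_of_deriv_pos fun x => by
    rw [deriv_tanh]
    linarith [tanh_sq_lt_one x]

theorem tanh_nonpos {x : ℝ} (hx : x ≤ 0) : tanh x ≤ 0 :=
  tanh_zero ▸ strictMono_tanh.monotone hx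

theorem tanh_nonneg {x : ℝ} (hx : 0 ≤ x) : 0 ≤ tanh x :=
  tanh_zero ▸ strictMono_tanh.monotone hx

theorem monotoneOn_one_sub_tanh_sq : MonotoneOn (fun x => 1 - tanh x ^ 2) (Iic 0) := by
  intro a _ b hb hab
  have := strictMono_tanh.monotone hab
  have := tanh_nonpos hb
  dsimp only
  nlinarith

theorem antitoneOn_one_sub_tanh_sq : AntitoneOn (fun x => 1 - tanh x ^ 2) (Ici 0) := by
  intro a ha b _ hab
  have := strictMono_tanh.monotone hab
  have := tanh_nonneg ha
  dsimp only
  nlinarith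

theorem convexOn_tanh_Iic : ConvexOn ℝ (Iic 0) tanh :=
  MonotoneOn.convexOn_of_deriv (convex_Iic 0) differentiable_tanh.continuous.continuousOn
    differentiable_tanh.differentiableOn
    (by rw [interior_Iic, deriv_tanh]; exact monotoneOn_one_sub_tanh_sq.mono Iio_subset_Iic_self)

theorem concaveOn_tanh_Ici : ConcaveOn ℝ (Ici 0) tanh :=
  AntitoneOn.concaveOn_of_deriv (convex_Ici 0) differentiable_tanh.continuous.continuousOn
    differentiable_tanh.differentiableOn
    (by rw [interior_Ici, deriv_tanh]; exact antitoneOn_one_sub_tanh_sq.mono Ioi_subset_Ici_self)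

end Real

open Real

theorem ConvexOn.add_mul_sub_le_of_hasDerivAt {S : Set ℝ} {f : ℝ → ℝ} {f' x y : ℝ}
    (hf : ConvexOn ℝ S f) (hx : x ∈ S) (hy : y ∈ S) (hxy : x ≤ y) (hd : HasDerivAt f f' x) :
    f x + f' * (y - x) ≤ f y := by
  rcases hxy.eq_or_lt with rfl | hlt
  · simp
  have h := hf.le_slope_of_hasDerivAt hx hy hlt hd
  rw [slope_def_field, le_div_iff₀ (sub_pos.2 hlt)] at h
  linarith

theorem ConvexOn.le_of_concaveOn_of_mem_Icc {S : Set ℝ} {f g : ℝ → ℝ} {a b z : ℝ}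
    (hf : ConvexOn ℝ S f) (hg : ConcaveOn ℝ S g) (ha : a ∈ S) (hb : b ∈ S)
    (hfa : f a ≤ g a) (hfb : f b ≤ g b) (hz : z ∈ Icc a b) : f z ≤ g z := by
  have h := (hg.sub hf).min_le_of_mem_Icc ha hb hz
  simp only [Pi.sub_apply] at h
  exact sub_nonneg.1 ((le_min (sub_nonneg.2 hfa) (sub_nonneg.2 hfb)).trans h)

theorem convexOn_univ_ite_tangent {f f' : ℝ → ℝ} {c : ℝ}
    (hf : ∀ x ≤ c, HasDerivAt f (f' x) x) (hf' : MonotoneOn f' (Iic c)) :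
    ConvexOn ℝ univ (fun x => if x ≤ c then f x else f c + f' c * (x - c)) := by
  set F := fun x => if x ≤ c then f x else f c + f' c * (x - c) with hF
  have hline (x : ℝ) : HasDerivAt (fun x => f c + f' c * (x - c)) (f' c) x := by
    simpa using (((hasDerivAt_id x).sub_const c).const_mul (f' c)).const_add (f c)
  have hderiv (x : ℝ) : HasDerivAt F (f' (min x c)) x := by
    rcases lt_trichotomy x c with hlt | rfl | hgt
    · rw [min_eq_left hlt.le]
      refine (hf x hlt.le).congr_of_eventuallyEq ?_
      filter_upwards [Iio_mem_nhds hlt] with y hy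
      exact if_pos (le_of_lt hy)
    · rw [min_self, ← hasDerivWithinAt_univ, ← Iic_union_Ici]
      refine HasDerivWithinAt.union ?_ ?_
      · exact (hf x le_rfl).hasDerivWithinAt.congr (fun y hy => if_pos hy) (if_pos le_rfl)
      · refine (hline x).hasDerivWithinAt.congr (fun y (hy : x ≤ y) => ?_) (by simp [hF])
        simp only [hF]
        split_ifs with hyx
        · rw [le_antisymm hyx hy, sub_self, mul_zero, add_zero]
        · rfl
    · rw [min_eq_right hgt.le]
      refine (hline x).congr_of_eventuallyEq ?_
      filter_upwards [Ioi_mem_nhds hgt] with y hy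
      exact if_neg (not_le.2 hy)
  have hmono : Monotone fun x => f' (min x c) := fun a b hab =>
    hf' (min_le_right a c) (min_le_right b c) (min_le_min_right c hab)
  refine Monotone.convexOn_univ_of_deriv (fun x => (hderiv x).differentiableAt) ?_
  rwa [funext fun x => (hderiv x).deriv]

theorem tanh_convex_envelope_general (xL xU xc : ℝ) (h2 : 0 < xU)
    (hc : xc ∈ Set.Icc xL 0)
    (htan : 1 - Real.tanh xc ^ 2 = (Real.tanh xU - Real.tanh xc) / (xU - xc))
    (F : ℝ → ℝ)
    (hF : ∀ x, F x = if x ≤ xc then Real.tanh x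
      else Real.tanh xc + ((Real.tanh xU - Real.tanh xc) / (xU - xc)) * (x - xc)) :
    ConvexOn ℝ (Set.Icc xL xU) F ∧ ∀ x ∈ Set.Icc xL xU, F x ≤ Real.tanh x := by
  have hxc : xc < xU := hc.2.trans_lt h2
  have hF_eq : F = fun x => if x ≤ xc then tanh x else tanh xc + (1 - tanh xc ^ 2) * (x - xc) :=
    funext fun x => by rw [hF, htan]
  have hconv : ConvexOn ℝ univ F := hF_eq ▸
    convexOn_univ_ite_tangent (fun x _ => hasDerivAt_tanh x)
      (monotoneOn_one_sub_tanh_sq.mono (Iic_subset_Iic.2 hc.2))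
  have hle_nonpos (x : ℝ) (hx : x ≤ 0) : F x ≤ tanh x := by
    rw [hF, ← htan]
    split_ifs with hxxc
    · exact le_rfl
    · exact convexOn_tanh_Iic.add_mul_sub_le_of_hasDerivAt hc.2 hx (not_le.1 hxxc).le
        (hasDerivAt_tanh xc)
  have hF_xU : F xU = tanh xU := by
    rw [hF, if_neg (not_le.2 hxc), div_mul_cancel₀ _ (sub_pos.2 hxc).ne']
    ring
  refine ⟨hconv.subset (subset_univ _) (convex_Icc _ _), fun x hx => ?_⟩
  rcases le_total x 0 with hx0 | hx0
  · exact hle_nonpos x hx0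
  · exact (hconv.subset (subset_univ _) (convex_Ici 0)).le_of_concaveOn_of_mem_Icc
      concaveOn_tanh_Ici self_mem_Ici h2.le (hle_nonpos 0 le_rfl) hF_xU.le ⟨hx0, hx.2⟩

theorem tanh_convex_envelope (xL xU xc : ℝ) (h1 : xL < 0) (h2 : 0 < xU)
    (hc : xc ∈ Set.Icc xL 0)
    (htan : 1 - Real.tanh xc ^ 2 = (Real.tanh xU - Real.tanh xc) / (xU - xc))
    (F : ℝ → ℝ)
    (hF : ∀ x, F x = if x ≤ xc then Real.tanh x
      else Real.tanh xc + ((Real.tanh xU - Real.tanh xc) / (xU - xc)) * (x - xc)) :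
    ConvexOn ℝ (Set.Icc xL xU) F ∧ ∀ x ∈ Set.Icc xL xU, F x ≤ Real.tanh x :=
  tanh_convex_envelope_general xL xU xc h2 hc htan F hF
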